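/- Let $k$ be a field, and let $\tilde{k}_0$ be the multiplicative group of nonzero rational functions over $k$ expressible as $f/g$ where $f, g \in k[t]$ are polynomials with constant coefficients $f(0) = g(0) = 1$. Then $\tilde{k}_0$ is isomorphic as an abelian group to the direct sum $\bigoplus_{M} \mathbb{Z}$, where $M$ ranges over the maximal ideals of $k[t]$ other than the ideal $(t)$ generated by $t$. -/

import Mathlib

/-!
Every maximal ideal `M ≠ (t)` of `k[t]` has a unique generator `p_M` with `p_M(0) = 1`; send a
finitely supported `d : M ↦ d_M ∈ ℤ` to `∏ p_M ^ d_M`. This is onto `k̃₀` by unique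
factorization of numerator and denominator, each irreducible factor being rescaled to constant
coefficient `1`. It is injective because the `M`-adic valuation of `∏ p_M ^ d_M` is `exp (-d_M)`.
-/

open Polynomial

/-- The subgroup `k̃₀` of the units of `RatFunc k` consisting of rational functions
expressible as `f / g` with `f, g` polynomials having constant coefficient `1`. -/
def ktilde (k : Type*) [Field k] : Subgroup (RatFunc k)ˣ where
  carrier := {u | ∃ f g : Polynomial k, f.coeff 0 = 1 ∧ g.coeff 0 = 1 ∧
    (u : RatFunc k) = algebraMap (Polynomial k) (RatFunc k) f /
      algebraMap (Polynomial k) (RatFunc k) g}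
  one_mem' := ⟨1, 1, by simp, by simp, by simp⟩
  mul_mem' := by
    rintro u v ⟨f₁, g₁, hf₁, hg₁, h₁⟩ ⟨f₂, g₂, hf₂, hg₂, h₂⟩
    refine ⟨f₁ * f₂, g₁ * g₂, by simp [Polynomial.mul_coeff_zero, hf₁, hf₂],
      by simp [Polynomial.mul_coeff_zero, hg₁, hg₂], ?_⟩
    rw [Units.val_mul, h₁, h₂, map_mul, map_mul, div_mul_div_comm]
  inv_mem' := by
    rintro u ⟨f, g, hf, hg, h⟩
    refine ⟨g, f, hg, hf, ?_⟩
    rw [Units.val_inv_eq_inv_val, h, inv_div]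

namespace Polynomial

variable {k : Type*} [Field k]

variable (k) in
/-- Rescaling to constant coefficient `1`; since `0⁻¹ = 0`, polynomials with vanishing constant
coefficient are sent to `0`. -/
noncomputable def normalizeAtZero : k[X] →* k[X] where
  toFun f := C (f.coeff 0)⁻¹ * f
  map_one' := by simp
  map_mul' f g := by rw [mul_coeff_zero, mul_inv, C_mul]; ring

lemma normalizeAtZero_apply (f : k[X]) : normalizeAtZero k f = C (f.coeff 0)⁻¹ * f := rfl

lemma coeff_zero_normalizeAtZero {f : k[X]} (hf : f.coeff 0 ≠ 0) :
    (normalizeAtZero k f).coeff 0 = 1 := by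
  rw [normalizeAtZero_apply, coeff_C_mul, inv_mul_cancel₀ hf]

lemma normalizeAtZero_of_coeff_zero_eq_one {f : k[X]} (hf : f.coeff 0 = 1) :
    normalizeAtZero k f = f := by
  rw [normalizeAtZero_apply, hf, inv_one, C_1, one_mul]

lemma associated_normalizeAtZero {f : k[X]} (hf : f.coeff 0 ≠ 0) :
    Associated (normalizeAtZero k f) f :=
  associated_unit_mul_left f _ (isUnit_C.mpr (inv_ne_zero hf).isUnit)

lemma normalizeAtZero_of_isUnit {u : k[X]} (hu : IsUnit u) : normalizeAtZero k u = 1 := by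
  obtain ⟨c, hc, rfl⟩ := isUnit_iff.mp hu
  rw [normalizeAtZero_apply, coeff_C_zero, ← C_mul, inv_mul_cancel₀ hc.ne_zero, C_1]

lemma normalizeAtZero_eq_of_associated {f g : k[X]} (h : Associated f g) :
    normalizeAtZero k f = normalizeAtZero k g := by
  obtain ⟨u, rfl⟩ := h
  rw [map_mul, normalizeAtZero_of_isUnit u.isUnit, mul_one]

end Polynomial

open IsDedekindDomain HeightOneSpectrum WithZero

abbrev MaxIdealNeX (k : Type*) [Field k] :=
  {M : Ideal k[X] // M.IsMaximal ∧ M ≠ Ideal.span {X}}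

namespace MaxIdealNeX

variable {k : Type*} [Field k]

lemma not_le_span_X (M : MaxIdealNeX k) : ¬ M.1 ≤ Ideal.span {X} := fun h =>
  M.2.2 (M.2.1.eq_of_le (Ideal.span_singleton_ne_top not_isUnit_X) h)

lemma coeff_zero_generator_ne_zero (M : MaxIdealNeX k) :
    (Submodule.IsPrincipal.generator M.1).coeff 0 ≠ 0 := fun h => by
  refine M.not_le_span_X ?_
  rw [← Ideal.span_singleton_generator M.1, Ideal.span_singleton_le_span_singleton]
  exact X_dvd_iff.mpr h

noncomputable def gen (M : MaxIdealNeX k) : k[X] :=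
  normalizeAtZero k (Submodule.IsPrincipal.generator M.1)

lemma coeff_zero_gen (M : MaxIdealNeX k) : (gen M).coeff 0 = 1 :=
  coeff_zero_normalizeAtZero M.coeff_zero_generator_ne_zero

lemma gen_ne_zero (M : MaxIdealNeX k) : gen M ≠ 0 := fun h => by
  simpa [h] using coeff_zero_gen M

lemma span_gen (M : MaxIdealNeX k) : Ideal.span {gen M} = M.1 := by
  rw [gen, Ideal.span_singleton_eq_span_singleton.mpr
    (associated_normalizeAtZero M.coeff_zero_generator_ne_zero), Ideal.span_singleton_generator]

lemma gen_eq_of_span_eq {M : MaxIdealNeX k} {p : k[X]} (hp : p.coeff 0 = 1)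
    (h : Ideal.span {p} = M.1) : gen M = p := by
  rw [← normalizeAtZero_of_coeff_zero_eq_one hp, gen]
  refine normalizeAtZero_eq_of_associated (Ideal.span_singleton_eq_span_singleton.mp ?_)
  rw [Ideal.span_singleton_generator, h]

lemma exists_gen_eq_normalizeAtZero {p : k[X]} (hp : Irreducible p) (h0 : p.coeff 0 ≠ 0) :
    ∃ M : MaxIdealNeX k, gen M = normalizeAtZero k p := by
  have hq : (normalizeAtZero k p).coeff 0 = 1 := coeff_zero_normalizeAtZero h0
  have hmax : (Ideal.span {normalizeAtZero k p}).IsMaximal :=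
    PrincipalIdealRing.isMaximal_of_irreducible
      ((associated_normalizeAtZero h0).irreducible_iff.mpr hp)
  have hne : Ideal.span {normalizeAtZero k p} ≠ Ideal.span {X} := fun h => by
    have : X ∣ normalizeAtZero k p :=
      Ideal.mem_span_singleton.mp (h ▸ Ideal.mem_span_singleton_self _)
    simp [X_dvd_iff.mp this] at hq
  exact ⟨⟨_, hmax, hne⟩, gen_eq_of_span_eq hq rfl⟩

lemma gen_notMem {M M' : MaxIdealNeX k} (h : M' ≠ M) : gen M' ∉ M.1 := fun hmem => by
  refine h (Subtype.ext (M'.2.1.eq_of_le M.2.1.ne_top ?_))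
  rw [← span_gen M', Ideal.span_singleton_le_iff_mem]
  exact hmem

noncomputable def toHeightOneSpectrum (M : MaxIdealNeX k) : HeightOneSpectrum k[X] where
  asIdeal := M.1
  isPrime := M.2.1.isPrime
  ne_bot h := M.not_le_span_X (h ▸ bot_le)

lemma valuation_gen_self (M : MaxIdealNeX k) :
    M.toHeightOneSpectrum.valuation (RatFunc k) (algebraMap k[X] (RatFunc k) (gen M)) =
      exp (-1) := by
  rw [valuation_of_algebraMap]
  exact intValuation_singleton _ (gen_ne_zero M) (span_gen M).symm

lemma valuation_gen_of_ne {M M' : MaxIdealNeX k} (h : M' ≠ M) :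
    M.toHeightOneSpectrum.valuation (RatFunc k) (algebraMap k[X] (RatFunc k) (gen M')) = 1 := by
  rw [valuation_of_algebraMap, intValuation_eq_one_iff]
  exact gen_notMem h

noncomputable def genUnit (M : MaxIdealNeX k) : ktilde k :=
  ⟨Units.mk0 _ (RatFunc.algebraMap_ne_zero (gen_ne_zero M)),
    gen M, 1, coeff_zero_gen M, coeff_one_zero, by simp⟩

lemma coe_genUnit (M : MaxIdealNeX k) :
    ((genUnit M : (RatFunc k)ˣ) : RatFunc k) = algebraMap k[X] (RatFunc k) (gen M) := rfl

end MaxIdealNeX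

open MaxIdealNeX

section

variable {k : Type*} [Field k]

/-- `d ↦ ∏ gen M ^ d M`. -/
noncomputable def prodGenZPow : Multiplicative (MaxIdealNeX k →₀ ℤ) →* ktilde k :=
  AddMonoidHom.toMultiplicativeLeft
    (Finsupp.liftAddHom fun M => MonoidHom.toAdditiveRight (zpowersHom _ (genUnit M)))

lemma prodGenZPow_single (M : MaxIdealNeX k) (n : ℤ) :
    prodGenZPow (.ofAdd (Finsupp.single M n)) = genUnit M ^ n := by
  simp [prodGenZPow]

lemma valuation_prodGenZPow (M : MaxIdealNeX k) (d : MaxIdealNeX k →₀ ℤ) :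
    M.toHeightOneSpectrum.valuation (RatFunc k)
      ((prodGenZPow (.ofAdd d) : (RatFunc k)ˣ) : RatFunc k) = exp (-d M) := by
  induction d using Finsupp.induction_linear with
  | zero => simp
  | add f g hf hg =>
    rw [ofAdd_add, map_mul, Subgroup.coe_mul, Units.val_mul, map_mul, hf, hg,
      Finsupp.add_apply, neg_add, exp_add]
  | single M' n =>
    rw [prodGenZPow_single, Subgroup.coe_zpow, Units.val_zpow_eq_zpow_val, coe_genUnit,
      map_zpow₀]
    by_cases h : M' = M
    · subst h
      rw [valuation_gen_self, Finsupp.single_eq_same, ← exp_zsmul, smul_neg, smul_eq_mul, mul_one]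
    · rw [valuation_gen_of_ne h, Finsupp.single_eq_of_ne (Ne.symm h), one_zpow, neg_zero, exp_zero]

lemma prodGenZPow_injective : Function.Injective (prodGenZPow (k := k)) := by
  refine (injective_iff_map_eq_one _).mpr fun d hd => ?_
  refine Multiplicative.toAdd.injective (Finsupp.ext fun M => ?_)
  have hv := valuation_prodGenZPow M d.toAdd
  rw [ofAdd_toAdd, hd, OneMemClass.coe_one, Units.val_one, map_one] at hv
  simpa using hv.symm

lemma exists_prodGenZPow_eq_normalizeAtZero (f : k[X]) (hf : f.coeff 0 ≠ 0) :
    ∃ d : Multiplicative (MaxIdealNeX k →₀ ℤ),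
      ((prodGenZPow d : (RatFunc k)ˣ) : RatFunc k) =
        algebraMap k[X] (RatFunc k) (normalizeAtZero k f) := by
  induction f using WfDvdMonoid.induction_on_irreducible with
  | zero => simp at hf
  | unit u hu => exact ⟨1, by simp [normalizeAtZero_of_isUnit hu]⟩
  | mul a p _ hp ih =>
    rw [mul_coeff_zero] at hf
    obtain ⟨M, hM⟩ := exists_gen_eq_normalizeAtZero hp (left_ne_zero_of_mul hf)
    obtain ⟨d, hd⟩ := ih (right_ne_zero_of_mul hf)
    refine ⟨.ofAdd (Finsupp.single M 1) * d, ?_⟩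
    rw [map_mul, prodGenZPow_single, zpow_one, Subgroup.coe_mul, Units.val_mul, coe_genUnit, hd,
      hM, map_mul, map_mul]

lemma prodGenZPow_surjective : Function.Surjective (prodGenZPow (k := k)) := by
  rintro ⟨u, f, g, hf, hg, hu⟩
  obtain ⟨df, hdf⟩ := exists_prodGenZPow_eq_normalizeAtZero f (by simp [hf])
  obtain ⟨dg, hdg⟩ := exists_prodGenZPow_eq_normalizeAtZero g (by simp [hg])
  refine ⟨df / dg, Subtype.ext (Units.ext ?_)⟩
  rw [_root_.map_div, Subgroup.coe_div, Units.val_div_eq_div_val, hdf, hdg, hu,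
    normalizeAtZero_of_coeff_zero_eq_one hf, normalizeAtZero_of_coeff_zero_eq_one hg]

end

theorem stmt_9 (k : Type*) [Field k] :
    Nonempty (ktilde k ≃*
      Multiplicative ({M : Ideal (Polynomial k) // M.IsMaximal ∧
        M ≠ Ideal.span {(Polynomial.X : Polynomial k)}} →₀ ℤ)) :=
  ⟨(MulEquiv.ofBijective prodGenZPow ⟨prodGenZPow_injective, prodGenZPow_surjective⟩).symm⟩
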